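/- (Bound on the Taylor remainder.) Let d, e ≥ 1, let V₁,…,V_d : ℝ^e → ℝ^e be smooth vector fields, let F : ℝ^e → ℝ be smooth, let t > 0, let X : [0,t] → ℝ^d be a continuously differentiable path with length ℓ = ∫₀ᵗ ‖X'(u)‖ du, and let Y : [0,t] → ℝ^e be continuously differentiable with Y'(u) = Σ_{i=1}^{d} V_i(Y(u)) · (X^{(i)})'(u) for all u ∈ [0,t]. Let n ≥ 0 and suppose there is M ≥ 0 such that for every y ∈ ℝ^e and every tensor x : ({1,…,d})^{n+1} → ℝ, | Σ_{i₁,…,i_{n+1}} (∇_{V_{i₁}} ⋯ ∇_{V_{i_{n+1}}} F)(y) · x(i₁,…,i_{n+1}) | ≤ M · ( Σ_{i₁,…,i_{n+1}} x(i₁,…,i_{n+1})² )^{1/2}. Then the remainder R_{n+1}(t) = F(Y(t)) − Σ_{k=0}^{n} Σ_{i₁,…,i_k} (∇_{V_{i₁}} ⋯ ∇_{V_{i_k}} F)(Y(0)) · S^{(i₁⋯i_k)}_{[0,t]}(X) satisfies |R_{n+1}(t)| ≤ M · ℓ^{n+1} / (n+1)!. -/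

import Mathlib

open MeasureTheory

/-- The open ordered simplex `{ t : Fin n → ℝ | a < t 0 < t 1 < ⋯ < t (n-1) < b }`. -/
def orderedSimplex (a b : ℝ) (n : ℕ) : Set (Fin n → ℝ) :=
  {t | (∀ i, a < t i ∧ t i < b) ∧ ∀ i j : Fin n, i < j → t i < t j}

/-- The iterated integral `S^{(i₁⋯iₙ)}_{[a,b]}(X)` of a path `X : ℝ → ℝ^d`,
associated with the multi-index `idx`, i.e. the integral of the product of the
derivatives of the indicated components over the ordered simplex.
For `n = 0` this is automatically `1` (integral of the empty product over the
whole one-point space `Fin 0 → ℝ`, which has total measure one). -/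
noncomputable def sig {d : ℕ} (X : ℝ → Fin d → ℝ) (a b : ℝ) {n : ℕ}
    (idx : Fin n → Fin d) : ℝ :=
  ∫ t in orderedSimplex a b n, ∏ i, deriv (fun u => X u (idx i)) (t i)

/-- The directional derivative `(∇_V G)(y) = Σ_k V^{(k)}(y) ∂G/∂y^{(k)}(y)` of a
function `G : ℝ^e → ℝ` along a vector field `V : ℝ^e → ℝ^e`. -/
noncomputable def dirDeriv {e : ℕ} (V : (Fin e → ℝ) → Fin e → ℝ)
    (G : (Fin e → ℝ) → ℝ) : (Fin e → ℝ) → ℝ :=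
  fun y => ∑ j, V y j * fderiv ℝ G y (Pi.single j 1)

/-- Iterated directional derivatives `∇_{V_{i₁}} ⋯ ∇_{V_{i_k}} F` along the vector
fields selected by the multi-index `idx`; the outermost derivative corresponds to
the first index.  For `k = 0` this is `F` itself. -/
noncomputable def itDirDeriv {d e : ℕ} (V : Fin d → (Fin e → ℝ) → Fin e → ℝ)
    (F : (Fin e → ℝ) → ℝ) : {k : ℕ} → (Fin k → Fin d) → (Fin e → ℝ) → ℝ
  | 0, _ => F
  | k + 1, idx => dirDeriv (V (idx 0)) (itDirDeriv V F (fun i : Fin k => idx i.succ))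

open intervalIntegral


/-- Nested iterated integral: `nest f idx g s = ∫_{0<u₀<⋯<u_{k-1}<s} g u₀ ∏ f (idx i) uᵢ`. -/
noncomputable def nest {d : ℕ} (f : Fin d → ℝ → ℝ) : {k : ℕ} → (Fin k → Fin d) → (ℝ → ℝ) → ℝ → ℝ
  | 0, _, g => g
  | _ + 1, idx, g => nest f (Fin.tail idx) (fun u => ∫ v in (0:ℝ)..u, g v * f (idx 0) v)

variable {d : ℕ} {f : Fin d → ℝ → ℝ}

theorem nest_zero (idx : Fin 0 → Fin d) (g : ℝ → ℝ) : nest f idx g = g := rfl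

theorem nest_succ {k : ℕ} (idx : Fin (k+1) → Fin d) (g : ℝ → ℝ) :
    nest f idx g = nest f (Fin.tail idx) (fun u => ∫ v in (0:ℝ)..u, g v * f (idx 0) v) := rfl

theorem nest_cons {k : ℕ} (i : Fin d) (idx : Fin k → Fin d) (g : ℝ → ℝ) :
    nest f (Fin.cons i idx) g = nest f idx (fun u => ∫ v in (0:ℝ)..u, g v * f i v) := by
  rw [nest_succ, Fin.tail_cons, Fin.cons_zero]

theorem nest_continuous (hf : ∀ j, Continuous (f j)) :
    ∀ {k : ℕ} (idx : Fin k → Fin d) (g : ℝ → ℝ), Continuous g → Continuous (nest f idx g)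
  | 0, idx, g, hg => hg
  | k + 1, idx, g, hg => by
    rw [nest_succ]
    exact nest_continuous hf _ _ <| intervalIntegral.continuous_primitive
      (fun a b => ((hg.mul (hf _)).intervalIntegrable a b)) 0

theorem nest_congr {t : ℝ} :
    ∀ {k : ℕ} (idx : Fin k → Fin d) (g g' : ℝ → ℝ), Set.EqOn g g' (Set.Icc 0 t) →
      ∀ s ∈ Set.Icc (0:ℝ) t, nest f idx g s = nest f idx g' s
  | 0, idx, g, g', h, s, hs => h hs
  | k + 1, idx, g, g', h, s, hs => by
    rw [nest_succ, nest_succ]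
    refine nest_congr _ _ _ (fun u hu => ?_) s hs
    refine intervalIntegral.integral_congr fun v hv => ?_
    have hv' : v ∈ Set.Icc (0:ℝ) t := by
      rw [Set.uIcc_of_le hu.1] at hv
      exact ⟨hv.1, hv.2.trans hu.2⟩
    rw [h hv']

theorem nest_add (hf : ∀ j, Continuous (f j)) :
    ∀ {k : ℕ} (idx : Fin k → Fin d) (g h : ℝ → ℝ), Continuous g → Continuous h →
      nest f idx (fun u => g u + h u) = fun s => nest f idx g s + nest f idx h s
  | 0, idx, g, h, _, _ => rfl
  | k + 1, idx, g, h, hg, hh => by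
    rw [nest_succ]
    have : (fun u => ∫ v in (0:ℝ)..u, (g v + h v) * f (idx 0) v)
        = fun u => (∫ v in (0:ℝ)..u, g v * f (idx 0) v) + ∫ v in (0:ℝ)..u, h v * f (idx 0) v := by
      funext u
      rw [← intervalIntegral.integral_add (f := fun v => g v * f (idx 0) v)
        (g := fun v => h v * f (idx 0) v) ((hg.mul (hf _)).intervalIntegrable _ _)
        ((hh.mul (hf _)).intervalIntegrable _ _)]
      congr 1; funext v; ring
    rw [this,
      nest_add hf (Fin.tail idx) (fun u => ∫ v in (0:ℝ)..u, g v * f (idx 0) v)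
        (fun u => ∫ v in (0:ℝ)..u, h v * f (idx 0) v)
        (intervalIntegral.continuous_primitive (fun a b => ((hg.mul (hf _)).intervalIntegrable a b)) 0)
        (intervalIntegral.continuous_primitive (fun a b => ((hh.mul (hf _)).intervalIntegrable a b)) 0)]
    rfl

theorem nest_const_mul (c : ℝ) :
    ∀ {k : ℕ} (idx : Fin k → Fin d) (g : ℝ → ℝ),
      nest f idx (fun u => c * g u) = fun s => c * nest f idx g s
  | 0, idx, g => rfl
  | k + 1, idx, g => by
    rw [nest_succ]
    have : (fun u => ∫ v in (0:ℝ)..u, (c * g v) * f (idx 0) v)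
        = fun u => c * ∫ v in (0:ℝ)..u, g v * f (idx 0) v := by
      funext u
      rw [← intervalIntegral.integral_const_mul]
      congr 1; funext v; ring
    rw [this, nest_const_mul c (Fin.tail idx) _]
    rfl

theorem nest_sum (hf : ∀ j, Continuous (f j)) {ι : Type*} (s : Finset ι)
    {k : ℕ} (idx : Fin k → Fin d) (g : ι → ℝ → ℝ) (hg : ∀ i, Continuous (g i)) :
    nest f idx (fun u => ∑ i ∈ s, g i u) = fun r => ∑ i ∈ s, nest f idx (g i) r := by
  classical
  induction s using Finset.induction with
  | empty =>
    simp only [Finset.sum_empty]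
    have h := nest_const_mul (f := f) 0 idx (fun _ => (0:ℝ))
    simp only [zero_mul] at h
    exact h
  | insert _ _ hnotmem ih =>
    rename_i a s'
    simp only [Finset.sum_insert hnotmem]
    rw [nest_add hf idx _ _ (hg a) (by exact continuous_finset_sum _ fun i _ => hg i), ih]

/-- Peeling the *last* integral instead of the first. -/
theorem nest_last :
    ∀ {k : ℕ} (idx : Fin (k+1) → Fin d) (g : ℝ → ℝ) (s : ℝ),
      nest f idx g s = ∫ v in (0:ℝ)..s, nest f (Fin.init idx) g v * f (idx (Fin.last k)) v
  | 0, idx, g, s => by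
    rw [nest_succ]
    simp only [nest_zero]
    rfl
  | k + 1, idx, g, s => by
    rw [nest_succ, nest_last (Fin.tail idx) _ s]
    have h1 : Fin.init (Fin.tail idx) = Fin.tail (Fin.init idx) := by
      funext j
      simp only [Fin.init, Fin.tail, Fin.succ_castSucc]
    have h2 : Fin.tail idx (Fin.last k) = idx (Fin.last (k+1)) := by
      simp [Fin.tail, Fin.succ_last]
    rw [h1, h2, nest_succ (Fin.init idx) g]
    have h3 : Fin.init idx 0 = idx 0 := by simp [Fin.init]
    rw [h3]
section Fubini

variable {d : ℕ}

theorem isOpen_orderedSimplex (a b : ℝ) (n : ℕ) : IsOpen (orderedSimplex a b n) := by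
  have h : orderedSimplex a b n =
      (⋂ i, {t : Fin n → ℝ | a < t i ∧ t i < b}) ∩
      ⋂ (i) (j) (_ : i < j), {t : Fin n → ℝ | t i < t j} := by
    ext u
    simp only [orderedSimplex, Set.mem_setOf_eq, Set.mem_inter_iff, Set.mem_iInter]
  rw [h]
  refine IsOpen.inter (isOpen_iInter_of_finite fun i => ?_)
    (isOpen_iInter_of_finite fun i => isOpen_iInter_of_finite fun j =>
      isOpen_iInter_of_finite fun _ => isOpen_lt (continuous_apply i) (continuous_apply j))
  exact IsOpen.inter (isOpen_lt continuous_const (continuous_apply i))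
    (isOpen_lt (continuous_apply i) continuous_const)

theorem orderedSimplex_subset_Icc {s : ℝ} {n : ℕ} :
    orderedSimplex 0 s n ⊆ Set.Icc (fun _ => 0) (fun _ => s) := by
  intro u hu
  rw [Set.mem_Icc]
  exact ⟨fun i => le_of_lt (hu.1 i).1, fun i => le_of_lt (hu.1 i).2⟩

theorem integrableOn_simplex {f : Fin d → ℝ → ℝ} (hf : ∀ j, Continuous (f j)) {n : ℕ}
    (idx : Fin n → Fin d) (s : ℝ) :
    IntegrableOn (fun u : Fin n → ℝ => ∏ i, f (idx i) (u i)) (orderedSimplex 0 s n) := by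
  have hc : Continuous fun u : Fin n → ℝ => ∏ i, f (idx i) (u i) :=
    continuous_finset_prod _ fun i _ => (hf _).comp (continuous_apply i)
  exact (hc.continuousOn.integrableOn_compact
    (isCompact_Icc (a := fun _ : Fin n => (0:ℝ)) (b := fun _ => s))).mono_set
    orderedSimplex_subset_Icc

/-- Characterization of the preimage of the simplex under the "split off the
last coordinate" equivalence. -/
theorem preimage_simplex_eq {k : ℕ} {s : ℝ} :
    (fun p : ℝ × (Fin k → ℝ) => Fin.insertNth (Fin.last k) p.1 p.2) ⁻¹' orderedSimplex 0 s (k+1)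
      = {p : ℝ × (Fin k → ℝ) | p.1 ∈ Set.Ioo 0 s ∧ p.2 ∈ orderedSimplex 0 p.1 k} := by
  ext ⟨v, w⟩
  simp only [Set.mem_preimage, Set.mem_setOf_eq, Set.mem_Ioo, orderedSimplex]
  constructor
  · rintro ⟨h1, h2⟩
    have hv1 := h1 (Fin.last k)
    rw [Fin.insertNth_apply_same] at hv1
    refine ⟨hv1, ⟨fun i => ?_, fun i j hij => ?_⟩⟩
    · have hwi := h1 (Fin.castSucc i)
      rw [← Fin.succAbove_last_apply, Fin.insertNth_apply_succAbove] at hwi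
      have hlt : w i < v := by
        have := h2 (Fin.castSucc i) (Fin.last k) (Fin.castSucc_lt_last i)
        rwa [← Fin.succAbove_last_apply, Fin.insertNth_apply_succAbove,
          Fin.insertNth_apply_same] at this
      exact ⟨hwi.1, hlt⟩
    · have := h2 (Fin.castSucc i) (Fin.castSucc j) (by exact_mod_cast Fin.castSucc_lt_castSucc_iff.2 hij)
      rwa [← Fin.succAbove_last_apply, ← Fin.succAbove_last_apply (i := j),
        Fin.insertNth_apply_succAbove, Fin.insertNth_apply_succAbove] at this
  · rintro ⟨⟨hv0, hvs⟩, hw1, hw2⟩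
    constructor
    · intro i
      refine Fin.lastCases ?_ (fun j => ?_) i
      · rw [Fin.insertNth_apply_same]; exact ⟨hv0, hvs⟩
      · rw [← Fin.succAbove_last_apply, Fin.insertNth_apply_succAbove]
        exact ⟨(hw1 j).1, lt_trans (hw1 j).2 hvs⟩
    · intro i j hij
      refine Fin.lastCases (fun hij => ?_) (fun j' hij => ?_) j hij
      · rw [Fin.insertNth_apply_same]
        have hi : i ≠ Fin.last k := ne_of_lt hij
        obtain ⟨i', rfl⟩ := Fin.exists_castSucc_eq.2 hi
        rw [← Fin.succAbove_last_apply, Fin.insertNth_apply_succAbove]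
        exact (hw1 i').2
      · have hi : i ≠ Fin.last k := ne_of_lt (lt_trans hij (Fin.castSucc_lt_last j'))
        obtain ⟨i', rfl⟩ := Fin.exists_castSucc_eq.2 hi
        rw [← Fin.succAbove_last_apply, ← Fin.succAbove_last_apply (i := j'),
          Fin.insertNth_apply_succAbove, Fin.insertNth_apply_succAbove]
        exact hw2 i' j' (by exact_mod_cast Fin.castSucc_lt_castSucc_iff.1 hij)

theorem sig_rec {X : ℝ → Fin d → ℝ} (hX : ContDiff ℝ 1 X) {k : ℕ}
    (idx : Fin (k+1) → Fin d) {s : ℝ} (hs : 0 ≤ s) :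
    sig X 0 s idx = ∫ v in (0:ℝ)..s,
      sig X 0 v (Fin.init idx) * deriv (fun u => X u (idx (Fin.last k))) v := by
  classical
  set f : Fin d → ℝ → ℝ := fun j => deriv (fun u => X u j) with hfdef
  have hf : ∀ j, Continuous (f j) := fun j =>
    ((contDiff_pi.mp hX j).continuous_deriv le_rfl)
  set G : (Fin (k+1) → ℝ) → ℝ := fun u => ∏ i, f (idx i) (u i) with hGdef
  set S := orderedSimplex 0 s (k+1) with hSdef
  have hSmeas : MeasurableSet S := (isOpen_orderedSimplex _ _ _).measurableSet
  have hGint : IntegrableOn G S := integrableOn_simplex hf idx s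
  set e := MeasurableEquiv.piFinSuccAbove (fun _ : Fin (k+1) => ℝ) (Fin.last k) with hedef
  have hmp : MeasurePreserving e.symm
      ((volume : Measure ℝ).prod (volume : Measure (Fin k → ℝ))) volume := by
    have h1 := (measurePreserving_piFinSuccAbove (fun _ : Fin (k+1) => (volume : Measure ℝ))
      (Fin.last k)).symm e
    rw [volume_pi]
    convert h1 using 2
    rfl
    rfl
  have hsymm : ∀ p : ℝ × (Fin k → ℝ), e.symm p = Fin.insertNth (Fin.last k) p.1 p.2 := by
    intro p
    simp [hedef, MeasurableEquiv.piFinSuccAbove, Fin.insertNthEquiv]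
  -- change of variables
  have step1 : ∫ u in S, G u = ∫ p in e.symm ⁻¹' S, G (e.symm p)
      ∂((volume : Measure ℝ).prod (volume : Measure (Fin k → ℝ))) :=
    (hmp.setIntegral_preimage_emb (MeasurableEquiv.measurableEmbedding _) G S).symm
  have hTset : e.symm ⁻¹' S
      = {p : ℝ × (Fin k → ℝ) | p.1 ∈ Set.Ioo 0 s ∧ p.2 ∈ orderedSimplex 0 p.1 k} := by
    have h2 : ⇑e.symm ⁻¹' S
        = (fun p : ℝ × (Fin k → ℝ) => Fin.insertNth (Fin.last k) p.1 p.2) ⁻¹' S := by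
      ext p
      simp only [Set.mem_preimage, hsymm]
    rw [h2, hSdef, preimage_simplex_eq]
  have hTmeas : MeasurableSet (e.symm ⁻¹' S) := hSmeas.preimage e.symm.measurable
  -- the integrand on the product space
  have hGsymm : ∀ p : ℝ × (Fin k → ℝ),
      G (e.symm p) = (∏ i : Fin k, f (idx i.castSucc) (p.2 i)) * f (idx (Fin.last k)) p.1 := by
    intro p
    rw [hsymm, hGdef]
    simp only
    rw [Fin.prod_univ_castSucc]
    congr 1
    · refine Finset.prod_congr rfl fun i _ => ?_
      rw [← Fin.succAbove_last_apply, Fin.insertNth_apply_succAbove]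
    · rw [Fin.insertNth_apply_same]
  -- integrability on the product space
  have hint : Integrable ((S.indicator G) ∘ e.symm)
      ((volume : Measure ℝ).prod (volume : Measure (Fin k → ℝ))) := by
    rw [hmp.integrable_comp_emb (MeasurableEquiv.measurableEmbedding _)]
    rwa [integrable_indicator_iff hSmeas]
  have hcomp : ∀ p, (e.symm ⁻¹' S).indicator (fun p => G (e.symm p)) p
      = (S.indicator G) (e.symm p) := by
    intro p
    by_cases hp : e.symm p ∈ S
    · rw [Set.indicator_of_mem hp, Set.indicator_of_mem (by exact hp)]
    · rw [Set.indicator_of_notMem hp, Set.indicator_of_notMem (by exact hp)]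
  have step2 : ∫ p in e.symm ⁻¹' S, G (e.symm p)
      ∂((volume : Measure ℝ).prod (volume : Measure (Fin k → ℝ)))
      = ∫ v, ∫ w, (S.indicator G) (e.symm (v, w)) := by
    rw [← MeasureTheory.integral_indicator hTmeas]
    rw [show (e.symm ⁻¹' S).indicator (fun p => G (e.symm p)) = fun p => (S.indicator G) (e.symm p)
      from funext hcomp]
    exact integral_prod _ hint
  -- inner integral
  have hinner : ∀ v : ℝ, (∫ w, (S.indicator G) (e.symm (v, w)))
      = (Set.Ioo (0:ℝ) s).indicator
          (fun v => (∫ w in orderedSimplex 0 v k, ∏ i : Fin k, f (idx i.castSucc) (w i))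
            * f (idx (Fin.last k)) v) v := by
    intro v
    by_cases hv : v ∈ Set.Ioo (0:ℝ) s
    · rw [Set.indicator_of_mem hv]
      have : (fun w => (S.indicator G) (e.symm (v, w)))
          = (orderedSimplex 0 v k).indicator
              (fun w => (∏ i : Fin k, f (idx i.castSucc) (w i)) * f (idx (Fin.last k)) v) := by
        funext w
        by_cases hw : w ∈ orderedSimplex 0 v k
        · have hmem : e.symm (v, w) ∈ S := by
            have : (v, w) ∈ e.symm ⁻¹' S := by rw [hTset]; exact ⟨hv, hw⟩
            exact this
          rw [Set.indicator_of_mem hmem, Set.indicator_of_mem hw, hGsymm]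
        · have hmem : e.symm (v, w) ∉ S := by
            intro hc
            have : (v, w) ∈ e.symm ⁻¹' S := hc
            rw [hTset] at this
            exact hw this.2
          rw [Set.indicator_of_notMem hmem, Set.indicator_of_notMem hw]
      rw [this, MeasureTheory.integral_indicator (isOpen_orderedSimplex _ _ _).measurableSet,
        MeasureTheory.integral_mul_const]
    · rw [Set.indicator_of_notMem hv]
      have : (fun w => (S.indicator G) (e.symm (v, w))) = fun _ => (0:ℝ) := by
        funext w
        have hmem : e.symm (v, w) ∉ S := by
          intro hc
          have : (v, w) ∈ e.symm ⁻¹' S := hc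
          rw [hTset] at this
          exact hv this.1
        rw [Set.indicator_of_notMem hmem]
      rw [this, MeasureTheory.integral_zero]
  -- assemble
  rw [show sig X 0 s idx = ∫ u in S, G u from rfl, step1, step2]
  simp_rw [hinner]
  rw [MeasureTheory.integral_indicator measurableSet_Ioo, ← integral_Ioc_eq_integral_Ioo,
    ← intervalIntegral.integral_of_le hs]
  rfl

theorem sig_eq_nest {X : ℝ → Fin d → ℝ} (hX : ContDiff ℝ 1 X) :
    ∀ {k : ℕ} (idx : Fin k → Fin d) (s : ℝ), 0 ≤ s →
      sig X 0 s idx = nest (fun j => deriv fun u => X u j) idx (fun _ => 1) s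
  | 0, idx, s, hs => by
    have huniv : orderedSimplex 0 s 0 = Set.univ := by
      ext u
      simp [orderedSimplex]
    rw [show nest (fun j => deriv fun u => X u j) idx (fun _ => 1) s = 1 from rfl]
    rw [show sig X 0 s idx = ∫ u in orderedSimplex 0 s 0,
      ∏ i, deriv (fun u' => X u' (idx i)) (u i) from rfl, huniv]
    simp only [Finset.univ_eq_empty, Finset.prod_empty]
    rw [Measure.restrict_univ, MeasureTheory.integral_const, smul_eq_mul, mul_one]
    rw [show (volume : Measure (Fin 0 → ℝ)) = Measure.pi fun _ => volume from volume_pi,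
      measureReal_def, MeasureTheory.Measure.pi_empty_univ, ENNReal.toReal_one]
  | k + 1, idx, s, hs => by
    rw [sig_rec hX idx hs, nest_last]
    refine intervalIntegral.integral_congr fun v hv => ?_
    rw [Set.uIcc_of_le hs] at hv
    rw [sig_eq_nest hX (Fin.init idx) v hv.1]

end Fubini
section Deriv

variable {d e : ℕ} {V : Fin d → (Fin e → ℝ) → Fin e → ℝ} {F : (Fin e → ℝ) → ℝ}

theorem dirDeriv_contDiff {W : (Fin e → ℝ) → Fin e → ℝ} (hW : ContDiff ℝ (⊤ : ℕ∞) W)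
    {G : (Fin e → ℝ) → ℝ} (hG : ContDiff ℝ (⊤ : ℕ∞) G) : ContDiff ℝ (⊤ : ℕ∞) (dirDeriv W G) := by
  unfold dirDeriv
  refine ContDiff.sum fun j _ => ContDiff.mul (contDiff_pi.mp hW j) ?_
  exact ContDiff.clm_apply (hG.fderiv_right (by simp)) contDiff_const

theorem itDirDeriv_contDiff (hV : ∀ i, ContDiff ℝ (⊤ : ℕ∞) (V i)) (hF : ContDiff ℝ (⊤ : ℕ∞) F) :
    ∀ {k : ℕ} (idx : Fin k → Fin d), ContDiff ℝ (⊤ : ℕ∞) (itDirDeriv V F idx)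
  | 0, _ => hF
  | k + 1, idx => dirDeriv_contDiff (hV _) (itDirDeriv_contDiff hV hF _)

theorem itDirDeriv_cons {k : ℕ} (i : Fin d) (idx : Fin k → Fin d) :
    itDirDeriv V F (Fin.cons i idx) = dirDeriv (V i) (itDirDeriv V F idx) := by
  have h : (fun i' : Fin k => (Fin.cons (α := fun _ => Fin d) i idx) i'.succ) = idx := by
    funext j; simp
  rw [show itDirDeriv V F (Fin.cons i idx)
    = dirDeriv (V ((Fin.cons (α := fun _ => Fin d) i idx) 0))
      (itDirDeriv V F (fun i' : Fin k => (Fin.cons (α := fun _ => Fin d) i idx) i'.succ))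
    from rfl, Fin.cons_zero, h]

theorem fderiv_apply_eq_sum {G : (Fin e → ℝ) → ℝ} (y v : Fin e → ℝ) :
    fderiv ℝ G y v = ∑ j, v j * fderiv ℝ G y (Pi.single j 1) := by
  have hv : v = ∑ j, v j • (Pi.single j 1 : Fin e → ℝ) := by
    funext i
    simp [Finset.sum_apply, Pi.single_apply]
  conv_lhs => rw [hv]
  rw [map_sum]
  refine Finset.sum_congr rfl fun j _ => ?_
  rw [_root_.map_smul, smul_eq_mul]

theorem hasDerivAt_comp_Y {G : (Fin e → ℝ) → ℝ} (hG : ContDiff ℝ (⊤ : ℕ∞) G)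
    {t : ℝ} {X : ℝ → Fin d → ℝ} {Y : ℝ → Fin e → ℝ} (hY : ContDiff ℝ 1 Y)
    (hODE : ∀ u ∈ Set.Icc (0 : ℝ) t,
      deriv Y u = fun j => ∑ i, V i (Y u) j * deriv (fun s => X s i) u)
    {u : ℝ} (hu : u ∈ Set.Icc (0:ℝ) t) :
    HasDerivAt (fun r => G (Y r))
      (∑ i, dirDeriv (V i) G (Y u) * deriv (fun s => X s i) u) u := by
  have hYd : HasDerivAt Y (deriv Y u) u :=
    ((hY.differentiable one_ne_zero) u).hasDerivAt
  have hGd : HasFDerivAt G (fderiv ℝ G (Y u)) (Y u) :=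
    ((hG.differentiable (by simp)) (Y u)).hasFDerivAt
  have h := hGd.comp_hasDerivAt u hYd
  refine h.congr_deriv (Eq.symm ?_)
  rw [fderiv_apply_eq_sum, hODE u hu]
  simp only [dirDeriv]
  have key : ∀ (a : Fin d → Fin e → ℝ) (b : Fin d → ℝ) (c : Fin e → ℝ),
      ∑ i, (∑ j, a i j * c j) * b i = ∑ j, (∑ i, a i j * b i) * c j := by
    intro a b c
    simp_rw [Finset.sum_mul]
    rw [Finset.sum_comm]
    exact Finset.sum_congr rfl fun j _ => Finset.sum_congr rfl fun i _ => by ring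
  exact key (fun i j => V i (Y u) j) (fun i => deriv (fun s => X s i) u)
    (fun j => fderiv ℝ G (Y u) (Pi.single j 1))

theorem comp_Y_eq_integral {G : (Fin e → ℝ) → ℝ} (hG : ContDiff ℝ (⊤ : ℕ∞) G)
    (hV : ∀ i, ContDiff ℝ (⊤ : ℕ∞) (V i))
    {t : ℝ} {X : ℝ → Fin d → ℝ} (hX : ContDiff ℝ 1 X) {Y : ℝ → Fin e → ℝ}
    (hY : ContDiff ℝ 1 Y)
    (hODE : ∀ u ∈ Set.Icc (0 : ℝ) t,
      deriv Y u = fun j => ∑ i, V i (Y u) j * deriv (fun s => X s i) u)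
    {u : ℝ} (hu : u ∈ Set.Icc (0:ℝ) t) :
    G (Y u) = G (Y 0)
      + ∫ v in (0:ℝ)..u, ∑ i, dirDeriv (V i) G (Y v) * deriv (fun s => X s i) v := by
  have hcont : Continuous fun v => ∑ i, dirDeriv (V i) G (Y v) * deriv (fun s => X s i) v := by
    refine continuous_finset_sum _ fun i _ => Continuous.mul ?_ ?_
    · exact (dirDeriv_contDiff (hV i) hG).continuous.comp (hY.continuous)
    · exact (contDiff_pi.mp hX i).continuous_deriv le_rfl
  have h := intervalIntegral.integral_eq_sub_of_hasDerivAt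
    (f := fun r => G (Y r))
    (f' := fun v => ∑ i, dirDeriv (V i) G (Y v) * deriv (fun s => X s i) v)
    (a := 0) (b := u) ?_ (hcont.intervalIntegrable _ _)
  · rw [h]; ring
  · intro v hv
    rw [Set.uIcc_of_le hu.1] at hv
    exact hasDerivAt_comp_Y hG hY hODE ⟨hv.1, hv.2.trans hu.2⟩

end Deriv
section Bound

theorem nest_bound {d : ℕ} {f : Fin d → ℝ → ℝ} (hf : ∀ j, Continuous (f j))
    {t M : ℝ} (hM0 : 0 ≤ M) (N L : ℝ → ℝ)
    (hN : N = fun u => Real.sqrt (∑ i, f i u ^ 2))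
    (hL : L = fun s => ∫ v in (0:ℝ)..s, N v) :
    ∀ (k m : ℕ) (g : (Fin k → Fin d) → ℝ → ℝ), (∀ idx, Continuous (g idx)) →
      (∀ u ∈ Set.Icc (0:ℝ) t, ∀ x : (Fin k → Fin d) → ℝ,
        |∑ idx, g idx u * x idx|
          ≤ M * L u ^ m / (m.factorial : ℝ) * Real.sqrt (∑ idx, x idx ^ 2)) →
      ∀ s ∈ Set.Icc (0:ℝ) t,
        |∑ idx, nest f idx (g idx) s| ≤ M * L s ^ (m + k) / ((m + k).factorial : ℝ) := by
  have hNc : Continuous N := by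
    rw [hN]; exact (continuous_finset_sum _ fun i _ => (hf i).pow 2).sqrt
  have hLc : Continuous L := by
    rw [hL]
    exact intervalIntegral.continuous_primitive (fun a b => hNc.intervalIntegrable a b) 0
  have hLd : ∀ v : ℝ, HasDerivAt L (N v) v := by
    intro v; rw [hL]; exact (hNc.integral_hasStrictDerivAt 0 v).hasDerivAt
  have hL0 : L 0 = 0 := by rw [hL]; exact intervalIntegral.integral_same
  have hkey : ∀ (m' : ℕ) (u : ℝ),
      (∫ v in (0:ℝ)..u, M * L v ^ m' / (m'.factorial : ℝ) * N v)
        = M * L u ^ (m'+1) / ((m'+1).factorial : ℝ) := by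
    intro m' u
    have hder : ∀ v ∈ Set.uIcc (0:ℝ) u,
        HasDerivAt (fun w => M * L w ^ (m'+1) / ((m'+1).factorial : ℝ))
          (M * L v ^ m' / (m'.factorial : ℝ) * N v) v := by
      intro v _
      have h2 := (((hLd v).pow (m'+1)).const_mul M).div_const ((m'+1).factorial : ℝ)
      refine h2.congr_deriv (Eq.symm ?_)
      simp only [Nat.add_sub_cancel]
      have hfact : ((m'+1).factorial : ℝ) = ((m'+1 : ℕ) : ℝ) * (m'.factorial : ℝ) := by
        rw [Nat.factorial_succ]; push_cast; ring
      have hm : (m'.factorial : ℝ) ≠ 0 := Nat.cast_ne_zero.2 m'.factorial_ne_zero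
      have hm1 : ((m'+1 : ℕ) : ℝ) ≠ 0 := by positivity
      rw [hfact]
      field_simp
    rw [intervalIntegral.integral_eq_sub_of_hasDerivAt hder
      ((((continuous_const.mul (hLc.pow m')).div_const _).mul hNc).intervalIntegrable _ _)]
    rw [hL0, zero_pow (Nat.succ_ne_zero m'), mul_zero, zero_div, sub_zero]
  intro k
  induction k with
  | zero =>
    intro m g hg hbd s hs
    have h := hbd s hs (fun _ => 1)
    simp only [mul_one, one_pow] at h
    have h1 : ∑ _idx : Fin 0 → Fin d, (1:ℝ) = 1 := by
      rw [Finset.sum_const, Finset.card_univ]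
      simp
    rw [h1, Real.sqrt_one, mul_one] at h
    rw [Nat.add_zero]
    exact h
  | succ k IH =>
    intro m g hg hbd s hs
    have hPc : ∀ (i : Fin d) (idx' : Fin k → Fin d),
        Continuous (fun u => ∫ v in (0:ℝ)..u, g (Fin.cons i idx') v * f i v) := fun i idx' =>
      intervalIntegral.continuous_primitive
        (fun a b => ((hg _).mul (hf i)).intervalIntegrable a b) 0
    set P : Fin d → (Fin k → Fin d) → ℝ → ℝ :=
      fun i idx' u => ∫ v in (0:ℝ)..u, g (Fin.cons i idx') v * f i v with hP
    set G : (Fin k → Fin d) → ℝ → ℝ := fun idx' u => ∑ i, P i idx' u with hG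
    have hGc : ∀ idx', Continuous (G idx') :=
      fun idx' => continuous_finset_sum _ fun i _ => hPc i idx'
    have hre1 : ∑ idx : Fin (k+1) → Fin d, nest f idx (g idx) s
        = ∑ idx' : Fin k → Fin d, ∑ i : Fin d, nest f idx' (P i idx') s := by
      rw [Finset.sum_comm]
      rw [← Equiv.sum_comp (Fin.consEquiv fun _ => Fin d)
        (fun idx => nest f idx (g idx) s), Fintype.sum_prod_type]
      refine Finset.sum_congr rfl fun i _ => Finset.sum_congr rfl fun idx' _ => ?_
      have h1 : (Fin.consEquiv fun _ : Fin (k+1) => Fin d) (i, idx') = Fin.cons i idx' := rfl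
      rw [h1, nest_cons]
    have hre2 : ∀ idx' : Fin k → Fin d,
        ∑ i : Fin d, nest f idx' (P i idx') s = nest f idx' (G idx') s := by
      intro idx'
      have hns := nest_sum hf Finset.univ idx' (fun i => P i idx') (fun i => hPc i idx')
      rw [show G idx' = (fun u => ∑ i, P i idx' u) from rfl, hns]
    have hbd' : ∀ u ∈ Set.Icc (0:ℝ) t, ∀ x' : (Fin k → Fin d) → ℝ,
        |∑ idx', G idx' u * x' idx'|
          ≤ M * L u ^ (m+1) / ((m+1).factorial : ℝ) * Real.sqrt (∑ idx', x' idx' ^ 2) := by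
      intro u hu x'
      set c := Real.sqrt (∑ idx', x' idx' ^ 2) with hc
      have hc0 : 0 ≤ c := Real.sqrt_nonneg _
      have e1 : (∫ v in (0:ℝ)..u,
            ∑ idx' : Fin k → Fin d, ∑ i, g (Fin.cons i idx') v * f i v * x' idx')
          = ∑ idx', G idx' u * x' idx' := by
        rw [intervalIntegral.integral_finset_sum
          (f := fun idx' v => ∑ i, g (Fin.cons i idx') v * f i v * x' idx') (fun idx' _ =>
          (continuous_finset_sum _ fun i _ =>
            ((hg _).mul (hf i)).mul continuous_const).intervalIntegrable _ _)]
        refine Finset.sum_congr rfl fun idx' _ => ?_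
        rw [intervalIntegral.integral_finset_sum
          (f := fun i v => g (Fin.cons i idx') v * f i v * x' idx') (fun i _ =>
          (((hg _).mul (hf i)).mul continuous_const).intervalIntegrable _ _)]
        rw [show G idx' u = ∑ i, P i idx' u from rfl, Finset.sum_mul]
        refine Finset.sum_congr rfl fun i _ => ?_
        rw [show P i idx' u = ∫ v in (0:ℝ)..u, g (Fin.cons i idx') v * f i v from rfl,
          ← intervalIntegral.integral_mul_const]
      have hinnerc : Continuous fun v =>
          ∑ idx' : Fin k → Fin d, ∑ i, g (Fin.cons i idx') v * f i v * x' idx' :=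
        continuous_finset_sum _ fun idx' _ => continuous_finset_sum _ fun i _ =>
          ((hg _).mul (hf i)).mul continuous_const
      have hpt : ∀ v ∈ Set.Icc (0:ℝ) t,
          |∑ idx' : Fin k → Fin d, ∑ i, g (Fin.cons i idx') v * f i v * x' idx'|
            ≤ M * L v ^ m / (m.factorial : ℝ) * N v * c := by
        intro v hv
        have h1 : ∑ idx' : Fin k → Fin d, ∑ i, g (Fin.cons i idx') v * f i v * x' idx'
            = ∑ idx : Fin (k+1) → Fin d, g idx v * (f (idx 0) v * x' (Fin.tail idx)) := by
          rw [Finset.sum_comm]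
          rw [← Equiv.sum_comp (Fin.consEquiv fun _ => Fin d)
            (fun idx => g idx v * (f (idx 0) v * x' (Fin.tail idx))),
            Fintype.sum_prod_type]
          refine Finset.sum_congr rfl fun i _ => Finset.sum_congr rfl fun idx' _ => ?_
          have h2 : (Fin.consEquiv fun _ : Fin (k+1) => Fin d) (i, idx') = Fin.cons i idx' := rfl
          rw [h2]
          simp only [Fin.cons_zero, Fin.tail_cons]
          ring
        have h2 := hbd v hv (fun idx => f (idx 0) v * x' (Fin.tail idx))
        rw [h1]
        refine le_trans h2 (le_of_eq ?_)
        have h3 : ∑ idx : Fin (k+1) → Fin d, (f (idx 0) v * x' (Fin.tail idx))^2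
            = (∑ i, f i v ^2) * ∑ idx', x' idx' ^2 := by
          rw [← Equiv.sum_comp (Fin.consEquiv fun _ => Fin d)
            (fun idx => (f (idx 0) v * x' (Fin.tail idx))^2),
            Fintype.sum_prod_type, Finset.sum_mul_sum]
          refine Finset.sum_congr rfl fun i _ => Finset.sum_congr rfl fun idx' _ => ?_
          have h4 : (Fin.consEquiv fun _ : Fin (k+1) => Fin d) (i, idx') = Fin.cons i idx' := rfl
          rw [h4]
          simp only [Fin.cons_zero, Fin.tail_cons]
          ring
        rw [h3, Real.sqrt_mul (by positivity), hN]
        rw [hc]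
        ring
      have hBc : Continuous fun v => M * L v ^ m / (m.factorial : ℝ) * N v * c :=
        (((continuous_const.mul (hLc.pow m)).div_const _).mul hNc).mul continuous_const
      calc |∑ idx', G idx' u * x' idx'|
          = |∫ v in (0:ℝ)..u,
              ∑ idx' : Fin k → Fin d, ∑ i, g (Fin.cons i idx') v * f i v * x' idx'| := by
            rw [e1]
        _ ≤ ∫ v in (0:ℝ)..u,
              |∑ idx' : Fin k → Fin d, ∑ i, g (Fin.cons i idx') v * f i v * x' idx'| :=
            intervalIntegral.abs_integral_le_integral_abs hu.1
        _ ≤ ∫ v in (0:ℝ)..u, M * L v ^ m / (m.factorial : ℝ) * N v * c := by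
            refine intervalIntegral.integral_mono_on hu.1
              (hinnerc.abs.intervalIntegrable _ _) (hBc.intervalIntegrable _ _) ?_
            intro v hv
            exact hpt v ⟨hv.1, hv.2.trans hu.2⟩
        _ = (∫ v in (0:ℝ)..u, M * L v ^ m / (m.factorial : ℝ) * N v) * c := by
            rw [intervalIntegral.integral_mul_const]
        _ = M * L u ^ (m+1) / ((m+1).factorial : ℝ) * c := by rw [hkey]
    rw [hre1]
    rw [Finset.sum_congr rfl (fun idx' _ => hre2 idx')]
    have hfin := IH (m+1) G hGc hbd' s hs
    rw [show m + 1 + k = m + (k+1) from by omega] at hfin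
    exact hfin

end Bound
/-- bound on the Taylor remainder: if `Y' = Σᵢ Vᵢ(Y)·(X^{(i)})'` on
`[0,t]`, `ℓ` is the length of `X`, and the `(n+1)`-st iterated directional
derivatives of `F`, viewed as linear functionals on `(n+1)`-tensors, are uniformly
bounded by `M` in operator norm (with respect to the Euclidean tensor norm), then
the remainder of the `n`-th order non-commutative Taylor expansion satisfies
`|R_{n+1}(t)| ≤ M · ℓ^{n+1} / (n+1)!`. -/
theorem stmt_7 {d e : ℕ} (hd : 1 ≤ d) (he : 1 ≤ e)
    (V : Fin d → (Fin e → ℝ) → Fin e → ℝ) (hV : ∀ i, ContDiff ℝ (⊤ : ℕ∞) (V i))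
    (F : (Fin e → ℝ) → ℝ) (hF : ContDiff ℝ (⊤ : ℕ∞) F)
    (t : ℝ) (ht : 0 < t)
    (X : ℝ → Fin d → ℝ) (hX : ContDiff ℝ 1 X)
    (ℓ : ℝ)
    (hℓ : ℓ = ∫ u in (0:ℝ)..t, Real.sqrt (∑ i, (deriv (fun s => X s i) u) ^ 2))
    (Y : ℝ → Fin e → ℝ) (hY : ContDiff ℝ 1 Y)
    (hODE : ∀ u ∈ Set.Icc (0 : ℝ) t,
      deriv Y u = fun j => ∑ i, V i (Y u) j * deriv (fun s => X s i) u)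
    (n : ℕ) (M : ℝ) (hM0 : 0 ≤ M)
    (hM : ∀ (y : Fin e → ℝ) (x : (Fin (n + 1) → Fin d) → ℝ),
      |∑ idx : Fin (n + 1) → Fin d, itDirDeriv V F idx y * x idx| ≤
        M * Real.sqrt (∑ idx : Fin (n + 1) → Fin d, x idx ^ 2)) :
    |F (Y t) -
        ∑ k ∈ Finset.range (n + 1), ∑ idx : Fin k → Fin d,
          itDirDeriv V F idx (Y 0) * sig X 0 t idx| ≤
      M * ℓ ^ (n + 1) / ((n + 1).factorial : ℝ) := by
  classical
  have hfc : ∀ j, Continuous (deriv (fun s => X s j)) := fun j =>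
    (contDiff_pi.mp hX j).continuous_deriv le_rfl
  have hgc : ∀ {k : ℕ} (idx : Fin k → Fin d),
      Continuous fun u => itDirDeriv V F idx (Y u) :=
    fun idx => (itDirDeriv_contDiff hV hF idx).continuous.comp hY.continuous
  have hper : ∀ {m : ℕ} (idx : Fin m → Fin d),
      nest (fun j => deriv fun u => X u j) idx (fun u => itDirDeriv V F idx (Y u)) t
        = itDirDeriv V F idx (Y 0)
            * nest (fun j => deriv fun u => X u j) idx (fun _ => 1) t
          + ∑ i : Fin d, nest (fun j => deriv fun u => X u j) (Fin.cons i idx)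
              (fun u => itDirDeriv V F (Fin.cons i idx) (Y u)) t := by
    intro m idx
    have hPc : ∀ i : Fin d, Continuous (fun u => ∫ v in (0:ℝ)..u,
        itDirDeriv V F (Fin.cons i idx) (Y v) * deriv (fun s => X s i) v) := fun i =>
      intervalIntegral.continuous_primitive
        (fun a b => ((hgc (Fin.cons i idx)).mul (hfc i)).intervalIntegrable a b) 0
    have hHc : Continuous (fun u => ∫ v in (0:ℝ)..u,
        ∑ i, itDirDeriv V F (Fin.cons i idx) (Y v) * deriv (fun s => X s i) v) :=
      intervalIntegral.continuous_primitive
        (fun a b => (continuous_finset_sum _ fun i _ =>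
          ((hgc (Fin.cons i idx)).mul (hfc i))).intervalIntegrable a b) 0
    have heq : ∀ u ∈ Set.Icc (0:ℝ) t, itDirDeriv V F idx (Y u)
        = itDirDeriv V F idx (Y 0) + ∫ v in (0:ℝ)..u,
            ∑ i, itDirDeriv V F (Fin.cons i idx) (Y v) * deriv (fun s => X s i) v := by
      intro u hu
      rw [comp_Y_eq_integral (itDirDeriv_contDiff hV hF idx) hV hX hY hODE hu]
      have hsum : ∀ v : ℝ,
          ∑ i : Fin d, dirDeriv (V i) (itDirDeriv V F idx) (Y v) * deriv (fun s => X s i) v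
            = ∑ i : Fin d, itDirDeriv V F (Fin.cons i idx) (Y v) * deriv (fun s => X s i) v :=
        fun v => Finset.sum_congr rfl fun i _ => by rw [itDirDeriv_cons]
      simp_rw [hsum]
    have h1 := nest_congr (f := fun j => deriv fun u => X u j) idx
      (fun u => itDirDeriv V F idx (Y u))
      (fun u => itDirDeriv V F idx (Y 0) + ∫ v in (0:ℝ)..u,
          ∑ i, itDirDeriv V F (Fin.cons i idx) (Y v) * deriv (fun s => X s i) v)
      (fun u hu => heq u hu) t ⟨le_of_lt ht, le_rfl⟩
    have h3 := nest_const_mul (f := fun j => deriv fun u => X u j)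
      (itDirDeriv V F idx (Y 0)) idx (fun _ => 1)
    have h3' : (nest (fun j => deriv fun u => X u j) idx
        (fun _ : ℝ => itDirDeriv V F idx (Y 0)))
        = fun s => itDirDeriv V F idx (Y 0)
            * nest (fun j => deriv fun u => X u j) idx (fun _ => 1) s := by
      rw [← h3]
      congr 1
      funext u
      rw [mul_one]
    have h4 : (fun u => ∫ v in (0:ℝ)..u,
        ∑ i, itDirDeriv V F (Fin.cons i idx) (Y v) * deriv (fun s => X s i) v)
        = fun u => ∑ i : Fin d, ∫ v in (0:ℝ)..u,
            itDirDeriv V F (Fin.cons i idx) (Y v) * deriv (fun s => X s i) v := by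
      funext u
      rw [intervalIntegral.integral_finset_sum
        (f := fun i v => itDirDeriv V F (Fin.cons i idx) (Y v) * deriv (fun s => X s i) v) (fun i _ =>
        ((hgc (Fin.cons i idx)).mul (hfc i)).intervalIntegrable _ _)]
    rw [h1, congrFun (nest_add hfc idx _ _ continuous_const hHc) t, congrFun h3' t]
    congr 1
    rw [h4, congrFun (nest_sum hfc Finset.univ idx _ (fun i => hPc i)) t]
    exact Finset.sum_congr rfl fun i _ => by rw [← nest_cons]
  have identity : ∀ m : ℕ, F (Y t)
      = (∑ k ∈ Finset.range m, ∑ idx : Fin k → Fin d, itDirDeriv V F idx (Y 0)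
          * nest (fun j => deriv fun u => X u j) idx (fun _ => 1) t)
        + ∑ idx : Fin m → Fin d,
            nest (fun j => deriv fun u => X u j) idx (fun u => itDirDeriv V F idx (Y u)) t := by
    intro m
    induction m with
    | zero =>
      rw [Finset.range_zero, Finset.sum_empty, zero_add, Fintype.sum_unique]
      rfl
    | succ m IH =>
      rw [IH, Finset.sum_range_succ]
      have hstep : ∑ idx : Fin m → Fin d,
          nest (fun j => deriv fun u => X u j) idx (fun u => itDirDeriv V F idx (Y u)) t
          = (∑ idx : Fin m → Fin d, itDirDeriv V F idx (Y 0)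
              * nest (fun j => deriv fun u => X u j) idx (fun _ => 1) t)
            + ∑ idx : Fin (m+1) → Fin d,
                nest (fun j => deriv fun u => X u j) idx (fun u => itDirDeriv V F idx (Y u)) t := by
        rw [Finset.sum_congr rfl fun idx (_ : idx ∈ Finset.univ) => hper idx,
          Finset.sum_add_distrib]
        congr 1
        rw [Finset.sum_comm]
        rw [← Equiv.sum_comp (Fin.consEquiv fun _ => Fin d)
          (fun idx : Fin (m+1) → Fin d => nest (fun j => deriv fun u => X u j) idx
            (fun u => itDirDeriv V F idx (Y u)) t), Fintype.sum_prod_type]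
        exact Finset.sum_congr rfl fun i _ => Finset.sum_congr rfl fun idx' _ => rfl
      rw [hstep]
      ring
  have hdiff : F (Y t) - ∑ k ∈ Finset.range (n + 1), ∑ idx : Fin k → Fin d,
      itDirDeriv V F idx (Y 0) * sig X 0 t idx
      = ∑ idx : Fin (n+1) → Fin d,
          nest (fun j => deriv fun u => X u j) idx (fun u => itDirDeriv V F idx (Y u)) t := by
    have hs : ∑ k ∈ Finset.range (n + 1), ∑ idx : Fin k → Fin d,
        itDirDeriv V F idx (Y 0) * sig X 0 t idx
        = ∑ k ∈ Finset.range (n + 1), ∑ idx : Fin k → Fin d,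
          itDirDeriv V F idx (Y 0)
            * nest (fun j => deriv fun u => X u j) idx (fun _ => 1) t :=
      Finset.sum_congr rfl fun k _ => Finset.sum_congr rfl fun idx _ => by
        rw [sig_eq_nest hX idx t ht.le]
    rw [hs]
    conv_lhs => rw [identity (n+1)]
    ring
  rw [hdiff]
  have hbd0 : ∀ u ∈ Set.Icc (0:ℝ) t, ∀ x : (Fin (n+1) → Fin d) → ℝ,
      |∑ idx, (fun (idx : Fin (n+1) → Fin d) u => itDirDeriv V F idx (Y u)) idx u * x idx|
        ≤ M * (fun s => ∫ v in (0:ℝ)..s,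
            (fun u => Real.sqrt (∑ i, deriv (fun s' => X s' i) u ^ 2)) v) u ^ 0
          / ((0:ℕ).factorial : ℝ)
          * Real.sqrt (∑ idx, x idx ^ 2) := by
    intro u _ x
    simp only [pow_zero, Nat.factorial_zero, Nat.cast_one, mul_one, div_one]
    exact hM (Y u) x
  have hb := nest_bound hfc hM0
    (fun u => Real.sqrt (∑ i, deriv (fun s' => X s' i) u ^ 2))
    (fun s => ∫ v in (0:ℝ)..s,
      (fun u => Real.sqrt (∑ i, deriv (fun s' => X s' i) u ^ 2)) v) rfl rfl
    (n+1) 0 (fun idx u => itDirDeriv V F idx (Y u)) (fun idx => hgc idx) hbd0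
    t ⟨ht.le, le_rfl⟩
  rw [Nat.zero_add] at hb
  have hLt : (∫ v in (0:ℝ)..t,
      (fun u => Real.sqrt (∑ i, deriv (fun s' => X s' i) u ^ 2)) v) = ℓ := by
    rw [hℓ]
  rw [← hLt]
  exact hb
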